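/- Let k > 0 and σ ∈ [0, k). There is a constant C > 0 such that for every f : ℝ³ → ℂ with Fourier transform f̂ for which ‖f‖_{𝒳^{−1}} and ‖f‖_{𝒳^{k}} are finite, one has ‖f‖_{𝒳^{σ}} ≤ C · ‖f‖_{𝒳^{−1}}^{(k−σ)/(k+1)} · ‖f‖_{𝒳^{k}}^{(σ+1)/(k+1)}. -/

import Mathlib

/-! The weighted `L¹` norms `∫ w ^ s * g` are log-convex in `s`: Hölder's inequality with exponents
`1 / θ` and `1 / (1 - θ)`, applied to `(w ^ a * g) ^ θ * (w ^ b * g) ^ (1 - θ) = w ^ s * g` with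
`s = θ a + (1 - θ) b`, bounds `‖f‖_{𝒳^s}` by `‖f‖_{𝒳^a} ^ θ * ‖f‖_{𝒳^b} ^ (1 - θ)`. Taking
`a = -1`, `b = k` and `θ = (k - σ) / (k + 1)` gives the claim with `C = 1`. -/

open MeasureTheory Real
open scoped FourierTransform ENNReal

noncomputable section

/-- The Lei–Lin norm `‖f‖_{𝒳^σ} = ∫_{ℝ³} |ξ|^σ |f̂(ξ)| dξ` of a function
`f : ℝ³ → ℂ`, expressed via the Fourier transform `𝓕 f`. -/
def leiLinNorm (σ : ℝ) (f : EuclideanSpace ℝ (Fin 3) → ℂ) : ℝ :=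
  ∫ ξ : EuclideanSpace ℝ (Fin 3), ‖ξ‖ ^ σ * ‖𝓕 f ξ‖

section WeightedIntegral

variable {α : Type*} [MeasurableSpace α] {μ : Measure α}

theorem integral_rpow_mul_rpow_le_of_nonneg {u v : α → ℝ}
    (hu_nonneg : 0 ≤ᵐ[μ] u) (hv_nonneg : 0 ≤ᵐ[μ] v) (hu : Integrable u μ) (hv : Integrable v μ)
    {p q : ℝ} (hp : 0 ≤ p) (hq : 0 ≤ q) (hpq : p + q = 1) :
    ∫ a, u a ^ p * v a ^ q ∂μ ≤ (∫ a, u a ∂μ) ^ p * (∫ a, v a ∂μ) ^ q := by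
  have huv_nonneg : 0 ≤ᵐ[μ] fun a => u a ^ p * v a ^ q := by
    filter_upwards [hu_nonneg, hv_nonneg] with a hua hva
    exact mul_nonneg (rpow_nonneg hua p) (rpow_nonneg hva q)
  have huv_meas : AEStronglyMeasurable (fun a => u a ^ p * v a ^ q) μ :=
    ((hu.aemeasurable.pow_const p).mul (hv.aemeasurable.pow_const q)).aestronglyMeasurable
  have holder := ENNReal.lintegral_mul_norm_pow_le hu.aemeasurable.ennreal_ofReal
    hv.aemeasurable.ennreal_ofReal hp hq hpq
  rw [← ofReal_integral_eq_lintegral_ofReal hu hu_nonneg,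
    ← ofReal_integral_eq_lintegral_ofReal hv hv_nonneg] at holder
  have h_ofReal : ∫⁻ a, ENNReal.ofReal (u a ^ p * v a ^ q) ∂μ
      = ∫⁻ a, ENNReal.ofReal (u a) ^ p * ENNReal.ofReal (v a) ^ q ∂μ := by
    refine lintegral_congr_ae ?_
    filter_upwards [hu_nonneg, hv_nonneg] with a hua hva
    rw [ENNReal.ofReal_mul (rpow_nonneg hua p), ENNReal.ofReal_rpow_of_nonneg hua hp,
      ENNReal.ofReal_rpow_of_nonneg hva hq]
  rw [integral_eq_lintegral_of_nonneg_ae huv_nonneg huv_meas, h_ofReal]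
  calc (∫⁻ a, ENNReal.ofReal (u a) ^ p * ENNReal.ofReal (v a) ^ q ∂μ).toReal
      ≤ (ENNReal.ofReal (∫ a, u a ∂μ) ^ p * ENNReal.ofReal (∫ a, v a ∂μ) ^ q).toReal :=
        ENNReal.toReal_mono (by finiteness) holder
    _ = (∫ a, u a ∂μ) ^ p * (∫ a, v a ∂μ) ^ q := by
        rw [ENNReal.toReal_mul, ← ENNReal.toReal_rpow, ← ENNReal.toReal_rpow,
          ENNReal.toReal_ofReal (integral_nonneg_of_ae hu_nonneg),
          ENNReal.toReal_ofReal (integral_nonneg_of_ae hv_nonneg)]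

theorem weighted_rpow_mul_rpow_one_sub {r x : ℝ} (hr : 0 < r) (hx : 0 ≤ x) (a b θ : ℝ) :
    (r ^ a * x) ^ θ * (r ^ b * x) ^ (1 - θ) = r ^ (θ * a + (1 - θ) * b) * x := by
  have hx_split : x ^ θ * x ^ (1 - θ) = x := by
    rw [← rpow_add' hx (by simp), add_sub_cancel, rpow_one]
  rw [mul_rpow (by positivity) hx, mul_rpow (by positivity) hx, ← rpow_mul hr.le,
    ← rpow_mul hr.le, rpow_add hr, mul_comm a, mul_comm b]
  linear_combination (r ^ (θ * a) * r ^ ((1 - θ) * b)) * hx_split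

theorem integral_weight_rpow_mul_le_rpow_mul_rpow {w g : α → ℝ}
    (hw : ∀ᵐ x ∂μ, 0 < w x) (hg : 0 ≤ᵐ[μ] g) {a b θ : ℝ} (hθ₀ : 0 ≤ θ) (hθ₁ : θ ≤ 1)
    (ha : Integrable (fun x => w x ^ a * g x) μ)
    (hb : Integrable (fun x => w x ^ b * g x) μ) :
    ∫ x, w x ^ (θ * a + (1 - θ) * b) * g x ∂μ
      ≤ (∫ x, w x ^ a * g x ∂μ) ^ θ * (∫ x, w x ^ b * g x ∂μ) ^ (1 - θ) := by
  have h_nonneg (s : ℝ) : 0 ≤ᵐ[μ] fun x => w x ^ s * g x := by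
    filter_upwards [hw, hg] with x hwx hgx
    exact mul_nonneg (rpow_nonneg hwx.le s) hgx
  calc ∫ x, w x ^ (θ * a + (1 - θ) * b) * g x ∂μ
      = ∫ x, (w x ^ a * g x) ^ θ * (w x ^ b * g x) ^ (1 - θ) ∂μ := by
        refine integral_congr_ae ?_
        filter_upwards [hw, hg] with x hwx hgx
        exact (weighted_rpow_mul_rpow_one_sub hwx hgx a b θ).symm
    _ ≤ _ := integral_rpow_mul_rpow_le_of_nonneg (h_nonneg a) (h_nonneg b) ha hb hθ₀
        (by linarith) (by ring)

end WeightedIntegral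

theorem leiLinNorm_le_rpow_mul_rpow (f : EuclideanSpace ℝ (Fin 3) → ℂ) {a b θ : ℝ}
    (hθ₀ : 0 ≤ θ) (hθ₁ : θ ≤ 1)
    (ha : Integrable (fun ξ : EuclideanSpace ℝ (Fin 3) => ‖ξ‖ ^ a * ‖𝓕 f ξ‖))
    (hb : Integrable (fun ξ : EuclideanSpace ℝ (Fin 3) => ‖ξ‖ ^ b * ‖𝓕 f ξ‖)) :
    leiLinNorm (θ * a + (1 - θ) * b) f ≤ leiLinNorm a f ^ θ * leiLinNorm b f ^ (1 - θ) := by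
  have hw : ∀ᵐ ξ : EuclideanSpace ℝ (Fin 3), 0 < ‖ξ‖ := by
    filter_upwards [volume.ae_ne 0] with ξ hξ
    exact norm_pos_iff.2 hξ
  exact integral_weight_rpow_mul_le_rpow_mul_rpow hw (ae_of_all _ fun _ => norm_nonneg _)
    hθ₀ hθ₁ ha hb

theorem leiLin_interpolation_neg_one_k_general (k σ : ℝ) (hσ1 : 0 ≤ σ) (hσ2 : σ < k) :
    ∃ C > 0, ∀ f : EuclideanSpace ℝ (Fin 3) → ℂ,
      Integrable (fun ξ : EuclideanSpace ℝ (Fin 3) => ‖ξ‖ ^ (-1 : ℝ) * ‖𝓕 f ξ‖) →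
      Integrable (fun ξ : EuclideanSpace ℝ (Fin 3) => ‖ξ‖ ^ k * ‖𝓕 f ξ‖) →
      leiLinNorm σ f
        ≤ C * leiLinNorm (-1) f ^ ((k - σ) / (k + 1)) * leiLinNorm k f ^ ((σ + 1) / (k + 1)) := by
  have hk : 0 < k + 1 := by linarith
  set θ := (k - σ) / (k + 1)
  have hθ₀ : 0 ≤ θ := div_nonneg (by linarith) hk.le
  have hθ₁ : θ ≤ 1 := (div_le_one hk).2 (by linarith)
  have hσ : θ * (-1) + (1 - θ) * k = σ := by
    simp only [θ]
    field_simp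
    ring
  have h1θ : 1 - θ = (σ + 1) / (k + 1) := by
    simp only [θ]
    field_simp
    ring
  refine ⟨1, one_pos, fun f h₁ h₂ => ?_⟩
  rw [one_mul, ← h1θ, ← hσ]
  exact leiLinNorm_le_rpow_mul_rpow f hθ₀ hθ₁ h₁ h₂

/-- For `k > 0` and `σ ∈ [0,k)` there is `C > 0` such that for every
`f : ℝ³ → ℂ` with `‖f‖_{𝒳^{-1}}` and `‖f‖_{𝒳^{k}}` finite,
`‖f‖_{𝒳^{σ}} ≤ C ‖f‖_{𝒳^{-1}}^{(k-σ)/(k+1)} ‖f‖_{𝒳^{k}}^{(σ+1)/(k+1)}`. -/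
theorem leiLin_interpolation_neg_one_k (k σ : ℝ) (hk : 0 < k) (hσ1 : 0 ≤ σ) (hσ2 : σ < k) :
    ∃ C > 0, ∀ f : EuclideanSpace ℝ (Fin 3) → ℂ,
      Integrable (fun ξ : EuclideanSpace ℝ (Fin 3) => ‖ξ‖ ^ (-1 : ℝ) * ‖𝓕 f ξ‖) →
      Integrable (fun ξ : EuclideanSpace ℝ (Fin 3) => ‖ξ‖ ^ k * ‖𝓕 f ξ‖) →
      leiLinNorm σ f
        ≤ C * leiLinNorm (-1) f ^ ((k - σ) / (k + 1)) * leiLinNorm k f ^ ((σ + 1) / (k + 1)) :=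
  leiLin_interpolation_neg_one_k_general k σ hσ1 hσ2
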